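/- arXiv:1101.4971 — 4 statements merged into one kernel-verified Lean document; each statement's English description precedes it below -/
import Mathlib

section
/- If 0 < θ_i ≤ π/2 for i = 1,...,k with k ≥ 2 and ∑_{i=1}^k θ_i ≥ π/2, then ∑_{i=1}^k sin(θ_i) > 1. -/
open Real

/-! Jordan's inequality `2 / π * x ≤ sin x` on `[0, π / 2]` is strict below `π / 2`, so the sum
of sines exceeds `2 / π * ∑ θ i ≥ 1` unless every `θ i = π / 2`, when the sum is `k ≥ 2`. -/

theorem two_div_pi_mul_sum_lt_sum_sin {ι : Type*} [Fintype ι] (θ : ι → ℝ)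
    (hnonneg : ∀ i, 0 ≤ θ i) (hle : ∀ i, θ i ≤ π / 2) (hlt : ∃ j, 0 < θ j ∧ θ j < π / 2) :
    2 / π * ∑ i, θ i < ∑ i, sin (θ i) := by
  obtain ⟨j, hj_pos, hj_lt⟩ := hlt
  rw [Finset.mul_sum]
  exact Finset.sum_lt_sum (fun i _ => mul_le_sin (hnonneg i) (hle i))
    ⟨j, Finset.mem_univ j, mul_lt_sin hj_pos hj_lt⟩

theorem stmt_2 (k : ℕ) (hk : 2 ≤ k) (θ : Fin k → ℝ)
    (hpos : ∀ i, 0 < θ i) (hle : ∀ i, θ i ≤ π / 2)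
    (hsum : π / 2 ≤ ∑ i, θ i) :
    1 < ∑ i, sin (θ i) := by
  by_cases h : ∃ j, θ j < π / 2
  · obtain ⟨j, hj⟩ := h
    calc (1 : ℝ) = 2 / π * (π / 2) := by field_simp
      _ ≤ 2 / π * ∑ i, θ i := by gcongr
      _ < ∑ i, sin (θ i) :=
        two_div_pi_mul_sum_lt_sum_sin θ (fun i => (hpos i).le) hle ⟨j, hpos j, hj⟩
  · simp only [not_exists, not_lt] at h
    have hθ : ∀ i, θ i = π / 2 := fun i => (hle i).antisymm (h i)
    have hk' : (2 : ℝ) ≤ k := by exact_mod_cast hk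
    simp only [hθ, sin_pi_div_two, Finset.sum_const, Finset.card_univ, Fintype.card_fin,
      nsmul_eq_mul, mul_one]
    linarith
end

section
/- For positive reals d_0, d_1, d_2, set s_i = sinh(d_i/2) and suppose s_i < s_j + s_k for every permutation {i,j,k} of {0,1,2}. Then J defined by sinh(J) = 2 s_0 s_1 s_2 / sqrt((s_0+s_1+s_2)(−s_0+s_1+s_2)(s_0−s_1+s_2)(s_0+s_1−s_2)) satisfies sinh(J) ≥ s_i for each i, i.e. J ≥ d_i/2 for each i. -/
/-!
Put `s = sinh (d / 2)`. Since `(a+b+c)(-a+b+c)(a-b+c)(a+b-c) = (2bc)² - (b²+c²-a²)²` is Heron's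
`16 · area²` of the Euclidean triangle with sides `a, b, c`, `sinh J` is the diameter `abc / (2 · area)`
of its circumcircle, and every side of a triangle, being a chord of that circle, is at most this
diameter. Monotonicity of `sinh` turns `sinh (dᵢ / 2) ≤ sinh J` into `dᵢ / 2 ≤ J`.
-/

open Real

noncomputable def circumdiameter (a b c : ℝ) : ℝ :=
  2 * a * b * c / √((a + b + c) * (-a + b + c) * (a - b + c) * (a + b - c))

theorem circumdiameter_swap_left (a b c : ℝ) : circumdiameter a b c = circumdiameter b a c := by
  simp only [circumdiameter]
  ring_nf

theorem circumdiameter_swap_ends (a b c : ℝ) : circumdiameter a b c = circumdiameter c b a := by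
  simp only [circumdiameter]
  ring_nf

theorem le_circumdiameter {a b c : ℝ} (ha : a < b + c) (hb : b < a + c) (hc : c < a + b) :
    a ≤ circumdiameter a b c := by
  have hb₀ : 0 < b := by linarith
  have hc₀ : 0 < c := by linarith
  set Q := (a + b + c) * (-a + b + c) * (a - b + c) * (a + b - c)
  have hQ : 0 < Q := by
    have : 0 < a + b + c := by linarith
    have : 0 < -a + b + c := by linarith
    have : 0 < a - b + c := by linarith
    have : 0 < a + b - c := by linarith
    positivity
  have heron : Q = (2 * b * c) ^ 2 - (b ^ 2 + c ^ 2 - a ^ 2) ^ 2 := by ring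
  have hsqrt : √Q ≤ 2 * b * c :=
    Real.sqrt_le_iff.mpr ⟨by positivity, by nlinarith [sq_nonneg (b ^ 2 + c ^ 2 - a ^ 2)]⟩
  rw [circumdiameter, le_div_iff₀ (Real.sqrt_pos.mpr hQ)]
  calc a * √Q ≤ a * (2 * b * c) := mul_le_mul_of_nonneg_left hsqrt (by linarith)
    _ = 2 * a * b * c := by ring

theorem stmt_11_general (d₀ d₁ d₂ J : ℝ)
    (s₀ : ℝ) (s₁ : ℝ) (s₂ : ℝ)
    (hs₀ : s₀ = sinh (d₀ / 2)) (hs₁ : s₁ = sinh (d₁ / 2)) (hs₂ : s₂ = sinh (d₂ / 2))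
    (ht₀ : s₀ < s₁ + s₂) (ht₁ : s₁ < s₀ + s₂) (ht₂ : s₂ < s₀ + s₁)
    (hJ : sinh J = 2 * s₀ * s₁ * s₂ /
      Real.sqrt ((s₀ + s₁ + s₂) * (-s₀ + s₁ + s₂) * (s₀ - s₁ + s₂) * (s₀ + s₁ - s₂))) :
    J ≥ d₀ / 2 ∧ J ≥ d₁ / 2 ∧ J ≥ d₂ / 2 := by
  replace hJ : sinh J = circumdiameter s₀ s₁ s₂ := hJ
  subst hs₀ hs₁ hs₂
  refine ⟨sinh_le_sinh.mp ?_, sinh_le_sinh.mp ?_, sinh_le_sinh.mp ?_⟩ <;> rw [hJ]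
  · exact le_circumdiameter ht₀ ht₁ ht₂
  · rw [circumdiameter_swap_left]
    exact le_circumdiameter ht₁ ht₀ (by linarith)
  · rw [circumdiameter_swap_ends]
    exact le_circumdiameter (by linarith) (by linarith) (by linarith)

theorem stmt_11 (d₀ d₁ d₂ J : ℝ) (h₀ : 0 < d₀) (h₁ : 0 < d₁) (h₂ : 0 < d₂)
    (s₀ : ℝ) (s₁ : ℝ) (s₂ : ℝ)
    (hs₀ : s₀ = sinh (d₀ / 2)) (hs₁ : s₁ = sinh (d₁ / 2)) (hs₂ : s₂ = sinh (d₂ / 2))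
    (ht₀ : s₀ < s₁ + s₂) (ht₁ : s₁ < s₀ + s₂) (ht₂ : s₂ < s₀ + s₁)
    (hJ : sinh J = 2 * s₀ * s₁ * s₂ /
      Real.sqrt ((s₀ + s₁ + s₂) * (-s₀ + s₁ + s₂) * (s₀ - s₁ + s₂) * (s₀ + s₁ - s₂))) :
    J ≥ d₀ / 2 ∧ J ≥ d₁ / 2 ∧ J ≥ d₂ / 2 :=
  stmt_11_general d₀ d₁ d₂ J s₀ s₁ s₂ hs₀ hs₁ hs₂ ht₀ ht₁ ht₂ hJ
end

section
/- Fix d > 0 and 0 ≤ R ≤ d/2. The function f(n) = π − (2π/n) − 2·cosh(R)·arcsin(cos(π/n)/cosh(d/2)) is strictly increasing in real n ≥ 3; equivalently, D_{R,n}(d)/n is strictly increasing in n, where D_{R,n}(d) = (n−2)π − 2n·cosh(R)·arcsin(cos(π/n)/cosh(d/2)). -/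
/-!
With `θ = π / n`, which decreases within `(0, π / 3]` as `n` grows, the function is
`π - 2 (θ + cosh R · arcsin (cos θ / cosh (d / 2)))`. The bracket has derivative
`1 - cosh R · sin θ / √(cosh² (d / 2) - cos² θ)`, which is positive because `cosh R ≤ cosh (d / 2)`
and `cosh² (d / 2) - cos² θ > cosh² (d / 2) · sin² θ` as soon as `cosh (d / 2) > 1` and `cos θ > 0`.
-/

open Real

theorem hasDerivAt_arcsin_cos_div {c : ℝ} (hc : 1 < c) (θ : ℝ) :
    HasDerivAt (fun θ => arcsin (cos θ / c)) (-sin θ / √(c ^ 2 - cos θ ^ 2)) θ := by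
  have hc0 : 0 < c := one_pos.trans hc
  have hu : cos θ / c < 1 := (div_lt_one hc0).2 ((cos_le_one θ).trans_lt hc)
  have hu' : -1 < cos θ / c := by
    rw [lt_div_iff₀ hc0]; linarith [neg_one_le_cos θ]
  have hsqrt : √(c ^ 2 - cos θ ^ 2) = c * √(1 - (cos θ / c) ^ 2) := by
    rw [← sqrt_sq hc0.le, ← sqrt_mul (sq_nonneg c), sqrt_sq hc0.le]
    congr 1
    field_simp
  refine ((hasDerivAt_arcsin hu'.ne' hu.ne).comp θ
    ((hasDerivAt_cos θ).div_const c)).congr_deriv ?_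
  rw [hsqrt]
  field_simp

theorem mul_sin_lt_sqrt_sq_sub_cos_sq {c k θ : ℝ} (hc : 1 < c) (hk : k ≤ c)
    (hθ : θ ∈ Set.Ioo 0 (π / 2)) : k * sin θ < √(c ^ 2 - cos θ ^ 2) := by
  have hsin : 0 < sin θ := sin_pos_of_pos_of_lt_pi hθ.1 (by linarith [hθ.2, pi_pos])
  have hcos : 0 < cos θ := cos_pos_of_mem_Ioo ⟨by linarith [hθ.1, pi_pos], hθ.2⟩
  calc k * sin θ ≤ c * sin θ := by gcongr
    _ < √(c ^ 2 - cos θ ^ 2) := by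
      -- `c² - cos² θ = c² sin² θ + (c² - 1) cos² θ`
      rw [lt_sqrt (by positivity)]
      nlinarith [sin_sq_add_cos_sq θ, mul_pos (by nlinarith : 0 < c ^ 2 - 1) (pow_pos hcos 2)]

theorem strictMonoOn_add_mul_arcsin_cos_div {c k : ℝ} (hc : 1 < c) (hk : k ≤ c) :
    StrictMonoOn (fun θ => θ + k * arcsin (cos θ / c)) (Set.Icc 0 (π / 2)) := by
  have hderiv (θ : ℝ) : HasDerivAt (fun θ => θ + k * arcsin (cos θ / c))
      (1 - k * sin θ / √(c ^ 2 - cos θ ^ 2)) θ :=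
    ((hasDerivAt_id θ).add ((hasDerivAt_arcsin_cos_div hc θ).const_mul k)).congr_deriv
      (by ring)
  refine strictMonoOn_of_deriv_pos (convex_Icc _ _)
    (fun θ _ => (hderiv θ).continuousAt.continuousWithinAt) fun θ hθ => ?_
  rw [interior_Icc] at hθ
  have hsqrt : 0 < √(c ^ 2 - cos θ ^ 2) :=
    sqrt_pos.2 (by nlinarith [cos_sq_le_one θ])
  rw [(hderiv θ).deriv, sub_pos, div_lt_one hsqrt]
  exact mul_sin_lt_sqrt_sq_sub_cos_sq hc hk hθ

theorem stmt_16 (d R : ℝ) (hd : 0 < d) (hR0 : 0 ≤ R) (hR : R ≤ d / 2) :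
    StrictMonoOn (fun n : ℝ =>
        π - 2 * π / n - 2 * cosh R * arcsin (cos (π / n) / cosh (d / 2)))
      (Set.Ici (3 : ℝ)) := by
  have hc : 1 < cosh (d / 2) := one_lt_cosh.2 (by positivity)
  have hk : cosh R ≤ cosh (d / 2) := by
    rw [cosh_le_cosh, abs_of_nonneg hR0, abs_of_nonneg (by positivity)]
    exact hR
  have hmaps : Set.MapsTo (fun n : ℝ => π / n) (Set.Ici 3) (Set.Icc 0 (π / 2)) := fun n hn =>
    ⟨div_nonneg pi_pos.le (by linarith [hn.out]), by
      rw [div_le_div_iff_of_pos_left pi_pos (by linarith [hn.out]) two_pos]; linarith [hn.out]⟩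
  intro a ha b hb hab
  have ha0 : 0 < a := by linarith [ha.out]
  have hmono := strictMonoOn_add_mul_arcsin_cos_div hc hk (hmaps hb) (hmaps ha)
    (div_lt_div_of_pos_left pi_pos ha0 hab)
  simp only at hmono ⊢
  linarith [mul_div_assoc 2 π a, mul_div_assoc 2 π b]
end

section
/- For d > 0 and J ≥ d/2, with α = arccos(1 − 2 sinh(d/2)^2/sinh(J)^2) and β = arccos(tanh(d/2)/tanh(J)), one has sin(β) = 2·sinh(d/2)·cos(α/2)/sinh(d), equivalently sin(β)·cosh(d/2) = cos(α/2). -/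
/-! Both sides of the second identity equal `√(1 - sinh (d/2)^2 / sinh J^2)`: `cos (α/2)` by the
half-angle formula, and `sin β * cosh (d/2)` because
`1 - tanh (d/2)^2 / tanh J^2 = (1 - sinh (d/2)^2 / sinh J^2) / cosh (d/2)^2`.
The first identity then follows from `sinh d = 2 sinh (d/2) cosh (d/2)`. -/

open Real

lemma cos_arccos_div_two {y : ℝ} (hy₁ : -1 ≤ y) (hy₂ : y ≤ 1) :
    cos (arccos y / 2) = √((1 + y) / 2) := by
  rw [cos_half (by linarith [arccos_nonneg y, pi_pos]) (arccos_le_pi y), cos_arccos hy₁ hy₂]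

lemma cos_arccos_one_sub_two_mul_div_two {x : ℝ} (hx₀ : 0 ≤ x) (hx₁ : x ≤ 1) :
    cos (arccos (1 - 2 * x) / 2) = √(1 - x) := by
  rw [cos_arccos_div_two (by linarith) (by linarith)]
  ring_nf

lemma one_sub_sq_tanh_div_tanh (a : ℝ) {b : ℝ} (hb : b ≠ 0) :
    1 - (tanh a / tanh b) ^ 2 = (1 - sinh a ^ 2 / sinh b ^ 2) / cosh a ^ 2 := by
  have hsinh : sinh b ≠ 0 := sinh_ne_zero.mpr hb
  rw [tanh_eq_sinh_div_cosh, tanh_eq_sinh_div_cosh]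
  field_simp
  linear_combination sinh b ^ 2 * cosh_sq a - sinh a ^ 2 * cosh_sq b

lemma sin_arccos_tanh_div_tanh (a : ℝ) {b : ℝ} (hb : b ≠ 0) :
    sin (arccos (tanh a / tanh b)) = √(1 - sinh a ^ 2 / sinh b ^ 2) / cosh a := by
  rw [sin_arccos, one_sub_sq_tanh_div_tanh a hb, sqrt_div' _ (sq_nonneg _),
    sqrt_sq (cosh_pos a).le]

lemma sq_sinh_div_sq_sinh_le_one {a b : ℝ} (h : |a| ≤ |b|) : sinh a ^ 2 / sinh b ^ 2 ≤ 1 :=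
  div_le_one_of_le₀ (sq_le_sq.mpr (by simpa only [abs_sinh, sinh_le_sinh] using h))
    (sq_nonneg _)

theorem stmt_18 (d J : ℝ) (hd : 0 < d) (hJ : d / 2 ≤ J) :
    sin (arccos (tanh (d / 2) / tanh J)) =
      2 * sinh (d / 2) * cos (arccos (1 - 2 * sinh (d / 2) ^ 2 / sinh J ^ 2) / 2) / sinh d ∧
    sin (arccos (tanh (d / 2) / tanh J)) * cosh (d / 2) =
      cos (arccos (1 - 2 * sinh (d / 2) ^ 2 / sinh J ^ 2) / 2) := by
  have hd₂ : 0 < d / 2 := half_pos hd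
  have hJ₀ : 0 < J := hd₂.trans_le hJ
  have hx₁ : sinh (d / 2) ^ 2 / sinh J ^ 2 ≤ 1 :=
    sq_sinh_div_sq_sinh_le_one (by rwa [abs_of_pos hd₂, abs_of_pos hJ₀])
  have key : sin (arccos (tanh (d / 2) / tanh J)) * cosh (d / 2) =
      cos (arccos (1 - 2 * sinh (d / 2) ^ 2 / sinh J ^ 2) / 2) := by
    rw [sin_arccos_tanh_div_tanh _ hJ₀.ne', mul_div_assoc,
      cos_arccos_one_sub_two_mul_div_two (by positivity) hx₁, div_mul_cancel₀ _ (cosh_pos _).ne']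
  have hsinh : sinh d = 2 * sinh (d / 2) * cosh (d / 2) := by
    rw [← sinh_two_mul, mul_div_cancel₀ d two_ne_zero]
  refine ⟨?_, key⟩
  rw [← key, hsinh]
  field_simp [(sinh_pos_iff.mpr hd₂).ne', (cosh_pos (d / 2)).ne']
end
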